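/- The sum of f(a,b,c,d)² over all integers a ≥ 1, b,c ≥ 0, d with ad − bc = 1 converges and equals 2 − π/2, where f(a,b,c,d) = √(a²+b²) + √(c²+d²) − √((a+c)²+(b+d)²). -/

import Mathlib

/-- The triangle-inequality defect `f(a,b,c,d)`. -/
noncomputable def f (a b c d : ℤ) : ℝ :=
  Real.sqrt ((a : ℝ) ^ 2 + (b : ℝ) ^ 2) + Real.sqrt ((c : ℝ) ^ 2 + (d : ℝ) ^ 2) -
    Real.sqrt (((a : ℝ) + c) ^ 2 + ((b : ℝ) + d) ^ 2)

/-!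
The matrices `(a b; c d)` with `a ≥ 1`, `b, c ≥ 0` and `ad - bc = 1` are exactly the nodes of the
Stern–Brocot tree: its root is the identity, and the pair of rows `x = (a, b)`, `y = (c, d)` has
the children `(x, x + y)` and `(x + y, y)`. With the Cauchy–Schwarz defect
`δ(x, y) = ‖x‖‖y‖ - ⟪x, y⟫`, one has `f² = 2δ(x, y) - 2δ(x, x + y) - 2δ(x + y, y)`, so the sum
of `f²` over the first `n` levels telescopes to `2 - A (n + 1)`, where `A n` is the sum of `2δ`
over level `n`. Since `ad - bc = 1`, `δ = tan (θ / 2)` for the angle `θ` between `x` and `y`, and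
at each level these angles tile the quadrant, so `∑ 2 arctan δ = π / 2`. On level `n` we have
`⟪x, y⟫ ≥ n`, hence `δ ≤ 1 / (n + 1)`, and `δ - arctan δ ≤ δ³ / 3` gives
`A n = π / 2 + O(1 / n²)`.
-/
open Real Filter Topology

theorem hasSum_of_tendsto_sum_of_nonneg {ι : Type*} {g : ι → ℝ} {a : ℝ} (hg : ∀ i, 0 ≤ g i)
    {B : ℕ → Finset ι} (hB : Tendsto B atTop atTop)
    (h : Tendsto (fun n => ∑ i ∈ B n, g i) atTop (𝓝 a)) : HasSum g a := by
  have hle : ∀ s : Finset ι, ∑ i ∈ s, g i ≤ a := fun s =>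
    ge_of_tendsto h <| (tendsto_atTop.1 hB s).mono fun _ hs =>
      Finset.sum_le_sum_of_subset_of_nonneg hs fun i _ _ => hg i
  have hsum := (summable_of_sum_le hg hle).hasSum
  rwa [tendsto_nhds_unique (hsum.comp hB) h] at hsum

noncomputable def cauchySchwarzDefect (a b c d : ℝ) : ℝ :=
  √(a ^ 2 + b ^ 2) * √(c ^ 2 + d ^ 2) - (a * c + b * d)

theorem sq_triangle_defect_eq (a b c d : ℝ) :
    (√(a ^ 2 + b ^ 2) + √(c ^ 2 + d ^ 2) - √((a + c) ^ 2 + (b + d) ^ 2)) ^ 2 =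
      2 * cauchySchwarzDefect a b c d - 2 * cauchySchwarzDefect a b (a + c) (b + d) -
        2 * cauchySchwarzDefect (a + c) (b + d) c d := by
  have hx := sq_sqrt (by positivity : 0 ≤ a ^ 2 + b ^ 2)
  have hy := sq_sqrt (by positivity : 0 ≤ c ^ 2 + d ^ 2)
  have hxy := sq_sqrt (by positivity : 0 ≤ (a + c) ^ 2 + (b + d) ^ 2)
  unfold cauchySchwarzDefect
  linear_combination hx + hy + hxy

/-- Lagrange's identity `‖x‖²‖y‖² = ⟪x, y⟫² + (ad - bc)²`. -/
theorem cauchySchwarzDefect_eq {a b c d : ℝ} (h : a * d - b * c = 1) :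
    cauchySchwarzDefect a b c d = √((a * c + b * d) ^ 2 + 1) - (a * c + b * d) := by
  rw [cauchySchwarzDefect, ← sqrt_mul (by positivity)]
  congr 2
  linear_combination (a * d - b * c + 1) * h

theorem sqrt_sq_add_one_sub_pos (u : ℝ) : 0 < √(u ^ 2 + 1) - u := by
  have : |u| < √(u ^ 2 + 1) := by
    rw [← sqrt_sq_eq_abs]
    exact sqrt_lt_sqrt (sq_nonneg u) (lt_add_one _)
  linarith [le_abs_self u]

theorem sqrt_sq_add_one_sub_le {u : ℝ} (hu : 0 ≤ u) : √(u ^ 2 + 1) - u ≤ 1 / (u + 1) := by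
  have h1 : 1 ≤ √(u ^ 2 + 1) := one_le_sqrt.2 (by nlinarith)
  have hs := sq_sqrt (by positivity : 0 ≤ u ^ 2 + 1)
  rw [le_div_iff₀ (by positivity)]
  nlinarith

/-- The half-angle formula `tan (θ / 2) = csc θ - cot θ` for `θ = π / 2 - arctan u`. -/
theorem two_mul_arctan_sqrt_sq_add_one_sub {u : ℝ} (hu : 0 ≤ u) :
    2 * arctan (√(u ^ 2 + 1) - u) = π / 2 - arctan u := by
  rcases hu.eq_or_lt with rfl | hu
  · norm_num [arctan_one]
    ring
  have hs := sq_sqrt (by positivity : 0 ≤ u ^ 2 + 1)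
  have hpos := sqrt_sq_add_one_sub_pos u
  have hlt : √(u ^ 2 + 1) - u < 1 := by
    have : √(u ^ 2 + 1) < u + 1 := by
      rw [sqrt_lt' (by positivity)]
      nlinarith
    linarith
  have hden : 1 - (√(u ^ 2 + 1) - u) ^ 2 = 2 * u * (√(u ^ 2 + 1) - u) := by
    linear_combination -hs
  rw [two_mul_arctan (by linarith) hlt, ← arctan_inv_of_pos hu, hden]
  field_simp

theorem arctan_le_self {t : ℝ} (ht : 0 ≤ t) : arctan t ≤ t := by
  simpa [tan_arctan] using le_tan (arctan_nonneg.2 ht) (arctan_lt_pi_div_two t)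

theorem sub_pow_three_div_three_le_arctan {t : ℝ} (ht : 0 ≤ t) : t - t ^ 3 / 3 ≤ arctan t := by
  calc t - t ^ 3 / 3 = ∫ x in (0 : ℝ)..t, (1 - x ^ 2) := by norm_num [integral_pow]
    _ ≤ ∫ x in (0 : ℝ)..t, (1 + x ^ 2)⁻¹ := by
      refine intervalIntegral.integral_mono_on ht (by simp)
        intervalIntegral.intervalIntegrable_inv_one_add_sq fun x _ => ?_
      rw [inv_eq_one_div, le_div_iff₀ (by positivity)]
      nlinarith [sq_nonneg (x ^ 2)]
    _ = arctan t := by simp [integral_inv_one_add_sq]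

namespace SternBrocot

@[ext] structure Pair where
  a : ℤ
  b : ℤ
  c : ℤ
  d : ℤ

namespace Pair

variable {m : Pair}

def left (m : Pair) : Pair := ⟨m.a, m.b, m.a + m.c, m.b + m.d⟩

def right (m : Pair) : Pair := ⟨m.a + m.c, m.b + m.d, m.c, m.d⟩

/-- `b / a < d / c` are neighbours in the Farey sequence (with `d / 0 = ∞`). -/
def IsFarey (m : Pair) : Prop := 1 ≤ m.a ∧ 0 ≤ m.b ∧ 0 ≤ m.c ∧ m.a * m.d - m.b * m.c = 1

theorem IsFarey.one_le_d (h : m.IsFarey) : 1 ≤ m.d := by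
  obtain ⟨ha, hb, hc, hdet⟩ := h
  nlinarith

theorem IsFarey.left (h : m.IsFarey) : m.left.IsFarey := by
  obtain ⟨ha, hb, hc, hdet⟩ := h
  exact ⟨ha, hb, by dsimp only [Pair.left]; omega,
    by dsimp only [Pair.left]; linear_combination hdet⟩

theorem IsFarey.right (h : m.IsFarey) : m.right.IsFarey := by
  have hd := h.one_le_d
  obtain ⟨ha, hb, hc, hdet⟩ := h
  exact ⟨by dsimp only [Pair.right]; omega, by dsimp only [Pair.right]; omega, hc,
    by dsimp only [Pair.right]; linear_combination hdet⟩

theorem left_injective : Function.Injective left := by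
  intro m m' h
  simp only [left, mk.injEq] at h
  ext <;> omega

theorem right_injective : Function.Injective right := by
  intro m m' h
  simp only [right, mk.injEq] at h
  ext <;> omega

theorem IsFarey.left_ne_right {m' : Pair} (h : m.IsFarey) (h' : m'.IsFarey) :
    m.left ≠ m'.right := by
  obtain ⟨-, -, hc, -⟩ := h
  obtain ⟨ha', -, -, -⟩ := h'
  simp only [Pair.left, Pair.right, ne_eq, mk.injEq]
  omega

def inner (m : Pair) : ℤ := m.a * m.c + m.b * m.d

noncomputable def defect (m : Pair) : ℝ := cauchySchwarzDefect m.a m.b m.c m.d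

/-- The angle between `(a, b)` and `(c, d)`, as the difference of their polar angles. -/
noncomputable def angle (m : Pair) : ℝ := (π / 2 - arctan (m.c / m.d)) - arctan (m.b / m.a)

theorem f_sq_eq (m : Pair) :
    f m.a m.b m.c m.d ^ 2 = 2 * m.defect - 2 * m.left.defect - 2 * m.right.defect := by
  simp only [f, defect, left, right, Int.cast_add]
  exact sq_triangle_defect_eq _ _ _ _

theorem IsFarey.defect_eq (h : m.IsFarey) :
    m.defect = √((m.inner : ℝ) ^ 2 + 1) - m.inner := by
  obtain ⟨-, -, -, hdet⟩ := h
  rw [defect, cauchySchwarzDefect_eq (by exact_mod_cast hdet), inner]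
  push_cast
  rfl

theorem IsFarey.angle_eq_add (h : m.IsFarey) : m.angle = m.left.angle + m.right.angle := by
  have hd := h.one_le_d
  obtain ⟨ha, hb, hc, -⟩ := h
  have hac : (0 : ℝ) < m.a + m.c := by exact_mod_cast (by omega : 0 < m.a + m.c)
  have hbd : (0 : ℝ) < m.b + m.d := by exact_mod_cast (by omega : 0 < m.b + m.d)
  have hmid := arctan_inv_of_pos (div_pos hac hbd)
  rw [inv_div] at hmid
  simp only [angle, Pair.left, Pair.right, Int.cast_add]
  linarith

theorem IsFarey.angle_eq (h : m.IsFarey) : m.angle = 2 * arctan m.defect := by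
  have hd := h.one_le_d
  have hdefect := h.defect_eq
  obtain ⟨ha, hb, hc, hdet⟩ := h
  have ha' : (0 : ℝ) < m.a := by exact_mod_cast ha
  have hd' : (0 : ℝ) < m.d := by exact_mod_cast hd
  have hdet' : (m.a : ℝ) * m.d - m.b * m.c = 1 := by exact_mod_cast hdet
  have hinner : (0 : ℝ) ≤ m.inner := by
    rw [inner]
    push_cast
    positivity
  have hpolar : arctan (m.c / m.d) + arctan (m.b / m.a) = arctan m.inner := by
    rw [arctan_add]
    · have : 1 - m.c / m.d * (m.b / m.a) = ((m.a : ℝ) * m.d - m.b * m.c) / (m.a * m.d) := by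
        field_simp
      rw [this, hdet', inner]
      push_cast
      field_simp
    · rw [div_mul_div_comm, div_lt_one (by positivity)]
      linarith
  rw [hdefect, two_mul_arctan_sqrt_sq_add_one_sub hinner, angle]
  linarith

end Pair

open Pair

def node : List Bool → Pair
  | [] => ⟨1, 0, 0, 1⟩
  | true :: w => (node w).left
  | false :: w => (node w).right

theorem isFarey_node : ∀ w, (node w).IsFarey
  | [] => ⟨le_rfl, le_rfl, le_rfl, rfl⟩
  | true :: w => (isFarey_node w).left
  | false :: w => (isFarey_node w).right

theorem node_injective : Function.Injective node := by
  intro w w' h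
  induction w generalizing w' with
  | nil =>
    cases w' with
    | nil => rfl
    | cons x w' =>
      have hd := (isFarey_node w').one_le_d
      obtain ⟨ha, hb, hc, -⟩ := isFarey_node w'
      cases x <;> simp only [node, Pair.left, Pair.right, Pair.mk.injEq] at h <;> omega
  | cons x w ih =>
    cases w' with
    | nil =>
      have hd := (isFarey_node w).one_le_d
      obtain ⟨ha, hb, hc, -⟩ := isFarey_node w
      cases x <;> simp only [node, Pair.left, Pair.right, Pair.mk.injEq] at h <;> omega
    | cons x' w' =>
      cases x <;> cases x' <;> simp only [node] at h
      · rw [ih (right_injective h)]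
      · exact absurd h.symm ((isFarey_node w').left_ne_right (isFarey_node w))
      · exact absurd h ((isFarey_node w).left_ne_right (isFarey_node w'))
      · rw [ih (left_injective h)]

/-- Every Farey pair other than the root is a child of the pair obtained by subtracting the
smaller of its two vectors from the larger one. -/
theorem exists_node_eq (m : Pair) (h : m.IsFarey) : ∃ w, node w = m := by
  have hd := h.one_le_d
  obtain ⟨ha, hb, hc, hdet⟩ := h
  by_cases hroot : m.b = 0 ∧ m.c = 0
  · obtain ⟨hb0, hc0⟩ := hroot
    rw [hb0, hc0] at hdet
    have ha1 : m.a = 1 := by nlinarith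
    have hd1 : m.d = 1 := by nlinarith
    exact ⟨[], by ext <;> simp only [node] <;> omega⟩
  by_cases hac : m.a ≤ m.c
  · have hbd : m.b < m.d := by nlinarith
    obtain ⟨w, hw⟩ := exists_node_eq ⟨m.a, m.b, m.c - m.a, m.d - m.b⟩
      ⟨ha, hb, by dsimp only; omega, by dsimp only; linear_combination hdet⟩
    exact ⟨true :: w, by rw [node, hw]; ext <;> simp [Pair.left]⟩
  · have hdb : m.d ≤ m.b := by
      by_contra! hbd
      have : 1 ≤ m.b + m.c := by omega
      nlinarith [mul_le_mul_of_nonneg_right (show m.c + 1 ≤ m.a by omega) (by omega : 0 ≤ m.d),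
        mul_le_mul_of_nonneg_left (show m.b + 1 ≤ m.d by omega) (by omega : 0 ≤ m.c + 1)]
    obtain ⟨w, hw⟩ := exists_node_eq ⟨m.a - m.c, m.b - m.d, m.c, m.d⟩
      ⟨by dsimp only; omega, by dsimp only; omega, hc, by dsimp only; linear_combination hdet⟩
    exact ⟨false :: w, by rw [node, hw]; ext <;> simp [Pair.right]⟩
termination_by (m.b + m.c).toNat
decreasing_by all_goals omega

theorem length_le_inner_node : ∀ w, (w.length : ℤ) ≤ (node w).inner
  | [] => by simp [node, Pair.inner]
  | true :: w => by
    have ih := length_le_inner_node w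
    obtain ⟨ha, hb, -, -⟩ := isFarey_node w
    simp only [node, Pair.left, Pair.inner, List.length_cons] at ih ⊢
    push_cast
    nlinarith
  | false :: w => by
    have ih := length_le_inner_node w
    have hd := (isFarey_node w).one_le_d
    obtain ⟨-, -, hc, -⟩ := isFarey_node w
    simp only [node, Pair.right, Pair.inner, List.length_cons] at ih ⊢
    push_cast
    nlinarith

theorem defect_node_pos (w : List Bool) : 0 < (node w).defect := by
  rw [(isFarey_node w).defect_eq]
  exact sqrt_sq_add_one_sub_pos _

theorem defect_node_le (w : List Bool) : (node w).defect ≤ 1 / (w.length + 1) := by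
  have h : (w.length : ℝ) ≤ (node w).inner := by exact_mod_cast length_le_inner_node w
  rw [(isFarey_node w).defect_eq]
  calc _ ≤ 1 / ((node w).inner + 1 : ℝ) := sqrt_sq_add_one_sub_le ((Nat.cast_nonneg _).trans h)
    _ ≤ 1 / (w.length + 1) := by gcongr

def words : ℕ → Finset (List Bool)
  | 0 => {[]}
  | n + 1 => (words n).image (List.cons true) ∪ (words n).image (List.cons false)

theorem mem_words {n : ℕ} {w : List Bool} : w ∈ words n ↔ w.length = n := by
  induction n generalizing w with
  | zero => simp [words]
  | succ n ih =>
    cases w with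
    | nil => simp [words]
    | cons x w => cases x <;> simp [words, ih]

theorem sum_words_succ {M : Type*} [AddCommMonoid M] (g : List Bool → M) (n : ℕ) :
    ∑ w ∈ words (n + 1), g w = ∑ w ∈ words n, (g (true :: w) + g (false :: w)) := by
  have hdisj :
      Disjoint ((words n).image (List.cons true)) ((words n).image (List.cons false)) := by
    simp [Finset.disjoint_left]
  rw [words, Finset.sum_union hdisj, Finset.sum_image (by simp), Finset.sum_image (by simp),
    Finset.sum_add_distrib]

def wordsUpTo (n : ℕ) : Finset (List Bool) := (Finset.range (n + 1)).biUnion words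

theorem tendsto_wordsUpTo : Tendsto wordsUpTo atTop atTop := by
  refine tendsto_atTop_finset_of_monotone (fun m n hmn => ?_) fun w => ⟨w.length, ?_⟩
  · exact Finset.biUnion_subset_biUnion_of_subset_left _ (Finset.range_mono (by omega))
  · exact Finset.mem_biUnion.2 ⟨w.length, by simp, mem_words.2 rfl⟩

noncomputable def levelDefect (n : ℕ) : ℝ := ∑ w ∈ words n, 2 * (node w).defect

theorem levelDefect_zero : levelDefect 0 = 2 := by
  simp [levelDefect, words, node, Pair.defect, cauchySchwarzDefect]

theorem sum_words_angle (n : ℕ) : ∑ w ∈ words n, (node w).angle = π / 2 := by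
  induction n with
  | zero => simp [words, node, Pair.angle]
  | succ n ih =>
    rw [sum_words_succ, ← ih]
    exact Finset.sum_congr rfl fun w _ => ((isFarey_node w).angle_eq_add).symm

theorem sum_words_f_sq (n : ℕ) :
    ∑ w ∈ words n, f (node w).a (node w).b (node w).c (node w).d ^ 2 =
      levelDefect n - levelDefect (n + 1) := by
  rw [levelDefect, levelDefect, sum_words_succ, ← Finset.sum_sub_distrib]
  refine Finset.sum_congr rfl fun w _ => ?_
  rw [Pair.f_sq_eq, node, node]
  ring

theorem sum_wordsUpTo_f_sq (n : ℕ) :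
    ∑ w ∈ wordsUpTo n, f (node w).a (node w).b (node w).c (node w).d ^ 2 =
      2 - levelDefect (n + 1) := by
  rw [wordsUpTo, Finset.sum_biUnion, Finset.sum_congr rfl fun k _ => sum_words_f_sq k,
    Finset.sum_range_sub', levelDefect_zero]
  intro i _ j _ hij
  exact Finset.disjoint_left.2 fun w hi hj => hij ((mem_words.1 hi).symm.trans (mem_words.1 hj))

theorem levelDefect_antitone : Antitone levelDefect :=
  antitone_nat_of_succ_le fun n => by
    have := Finset.sum_nonneg fun w (_ : w ∈ words n) =>
      sq_nonneg (f (node w).a (node w).b (node w).c (node w).d)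
    linarith [sum_words_f_sq n]

theorem pi_div_two_le_levelDefect (n : ℕ) : π / 2 ≤ levelDefect n := by
  rw [← sum_words_angle n, levelDefect]
  refine Finset.sum_le_sum fun w _ => ?_
  rw [(isFarey_node w).angle_eq]
  linarith [arctan_le_self (defect_node_pos w).le]

theorem levelDefect_le (n : ℕ) : levelDefect n ≤ π / 2 + 2 / (n + 1) ^ 2 := by
  have key : levelDefect n - π / 2 ≤ levelDefect n / (n + 1) ^ 2 := by
    rw [← sum_words_angle n, levelDefect, ← Finset.sum_sub_distrib, Finset.sum_div]
    refine Finset.sum_le_sum fun w hw => ?_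
    set δ := (node w).defect
    have hpos : 0 < δ := defect_node_pos w
    have hle : δ ≤ 1 / (n + 1) := by simpa [mem_words.1 hw] using defect_node_le w
    have hsq : δ ^ 2 ≤ 1 / (n + 1) ^ 2 := by
      rw [one_div, ← inv_pow, ← one_div]
      gcongr
    have := sub_pow_three_div_three_le_arctan hpos.le
    calc 2 * δ - (node w).angle = 2 * δ - 2 * arctan δ := by rw [(isFarey_node w).angle_eq]
      _ ≤ 2 * δ * δ ^ 2 := by nlinarith
      _ ≤ 2 * δ * (1 / (n + 1) ^ 2) := by gcongr
      _ = 2 * δ / (n + 1) ^ 2 := by ring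
  have h2 : levelDefect n ≤ 2 := levelDefect_zero ▸ levelDefect_antitone (Nat.zero_le n)
  have : levelDefect n / (n + 1) ^ 2 ≤ 2 / (n + 1) ^ 2 := by gcongr
  linarith

theorem tendsto_levelDefect : Tendsto levelDefect atTop (𝓝 (π / 2)) := by
  have h : Tendsto (fun n : ℕ => 2 / ((n : ℝ) + 1) ^ 2) atTop (𝓝 0) :=
    tendsto_const_nhds.div_atTop <| (tendsto_pow_atTop two_ne_zero).comp <|
      tendsto_atTop_add_const_right _ 1 tendsto_natCast_atTop_atTop
  exact tendsto_of_tendsto_of_tendsto_of_le_of_le tendsto_const_nhds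
    (by simpa using h.const_add (π / 2)) pi_div_two_le_levelDefect levelDefect_le

theorem hasSum_f_sq_node :
    HasSum (fun w => f (node w).a (node w).b (node w).c (node w).d ^ 2) (2 - π / 2) :=
  hasSum_of_tendsto_sum_of_nonneg (fun _ => sq_nonneg _) tendsto_wordsUpTo <| by
    simpa only [sum_wordsUpTo_f_sq, Function.comp_def] using
      tendsto_const_nhds.sub (tendsto_levelDefect.comp (tendsto_add_atTop_nat 1))

noncomputable def nodeEquiv : List Bool ≃ {x : ℤ × ℤ × ℤ × ℤ //
    1 ≤ x.1 ∧ 0 ≤ x.2.1 ∧ 0 ≤ x.2.2.1 ∧ x.1 * x.2.2.2 - x.2.1 * x.2.2.1 = 1} :=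
  Equiv.ofBijective (fun w => ⟨((node w).a, (node w).b, (node w).c, (node w).d), isFarey_node w⟩) <|
    ⟨fun w w' h => node_injective <| by simpa [Pair.ext_iff] using congrArg Subtype.val h,
      fun ⟨⟨a, b, c, d⟩, hx⟩ => by
        obtain ⟨w, hw⟩ := exists_node_eq ⟨a, b, c, d⟩ hx
        exact ⟨w, by simp [hw]⟩⟩

end SternBrocot

theorem sum_f_sq_eq :
    HasSum (fun x : {x : ℤ × ℤ × ℤ × ℤ //
        1 ≤ x.1 ∧ 0 ≤ x.2.1 ∧ 0 ≤ x.2.2.1 ∧ x.1 * x.2.2.2 - x.2.1 * x.2.2.1 = 1} =>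
      (f x.val.1 x.val.2.1 x.val.2.2.1 x.val.2.2.2) ^ 2) (2 - Real.pi / 2) :=
  SternBrocot.nodeEquiv.hasSum_iff.1 SternBrocot.hasSum_f_sq_node
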